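/- arXiv:2510.17302 — 8 statements merged into one kernel-verified Lean document; each statement's English description precedes it below -/
import Mathlib

section
/- Let M = ⟨W, R, {M_w}⟩ be a concrete mixed model and for each w ∈ W define T_w := {φ ∈ Form_□ | w̄ ⊩ φ}. Then ⟨W, R, {T_w}⟩ is a mixed model in MM(CPC,IPC): for every w ∈ W, (1) ⊥ ∉ T_w; (2) T_w is closed under ⊢_{L_w}-consequence, where L_w = CPC if p ∨ ¬p ∈ T_w for all propositional letters p, and L_w = IPC otherwise; (3) □φ ∈ T_w iff φ ∈ T_v for all v with wRv; (4) ¬□φ ∈ T_w iff there is v with wRv and φ ∉ T_v. -/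
/-- Modal formulas of the language `Form_□`: ⊤, ⊥, propositional letters,
∧, ∨, →, and a unary modality □. -/
inductive Formula : Type
  | top : Formula
  | bot : Formula
  | var : ℕ → Formula
  | and : Formula → Formula → Formula
  | or : Formula → Formula → Formula
  | imp : Formula → Formula → Formula
  | box : Formula → Formula

/-- `¬φ` abbreviates `φ → ⊥`. -/
def Formula.neg (φ : Formula) : Formula := φ.imp Formula.bot

/-- The standard intuitionistic propositional axiom schemes (over the modal language). -/
inductive IpcAxiom : Formula → Prop
  | a1 (A B : Formula) : IpcAxiom (A.imp (B.imp A))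
  | a2 (A B C : Formula) :
      IpcAxiom ((A.imp B).imp ((A.imp (B.imp C)).imp (A.imp C)))
  | a3 (A B : Formula) : IpcAxiom (A.imp (A.or B))
  | a4 (A B : Formula) : IpcAxiom (B.imp (A.or B))
  | a5 (A B C : Formula) :
      IpcAxiom ((A.or B).imp ((A.imp C).imp ((B.imp C).imp C)))
  | a6 (A B : Formula) : IpcAxiom (A.imp (B.imp (A.and B)))
  | a7 (A B : Formula) : IpcAxiom ((A.and B).imp A)
  | a8 (A B : Formula) : IpcAxiom ((A.and B).imp B)
  | a9 (A : Formula) : IpcAxiom (Formula.bot.imp A)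

/-- The excluded-middle scheme `¬A ∨ A`. -/
inductive EmAxiom : Formula → Prop
  | em (A : Formula) : EmAxiom ((Formula.neg A).or A)

/-- No extra axioms. -/
def NoAxiom : Formula → Prop := fun _ => False

/-- Hilbert-style derivability from assumptions `Γ`, with the intuitionistic
axiom schemes, extra axiom schemes `ext`, and Modus Ponens as sole rule. -/
inductive Der (ext : Formula → Prop) (Γ : Set Formula) : Formula → Prop
  | ax {φ : Formula} : IpcAxiom φ → Der ext Γ φ
  | extra {φ : Formula} : ext φ → Der ext Γ φ
  | hyp {φ : Formula} : φ ∈ Γ → Der ext Γ φ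
  | mp {φ ψ : Formula} : Der ext Γ (φ.imp ψ) → Der ext Γ φ → Der ext Γ ψ

/-- `Γ ⊢_IPC φ` (intuitionistic propositional calculus over the modal language). -/
def DerIPC : Set Formula → Formula → Prop := Der NoAxiom

/-- `Γ ⊢_CPC φ` (classical propositional calculus = IPC + excluded middle). -/
def DerCPC : Set Formula → Formula → Prop := Der EmAxiom

/-- The Box Excluded Middle scheme `□A ∨ ¬□A`. -/
inductive BemAxiom : Formula → Prop
  | bem (A : Formula) : BemAxiom ((Formula.box A).or (Formula.neg (Formula.box A)))

/-- Theorems of intuitionistic modal logic `iK` extended with the extra axiom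
schemes `ext`: intuitionistic axioms, the distribution scheme, closed under
Modus Ponens and Necessitation. -/
inductive IK (ext : Formula → Prop) : Formula → Prop
  | ax {φ : Formula} : IpcAxiom φ → IK ext φ
  | extra {φ : Formula} : ext φ → IK ext φ
  | dist (φ ψ : Formula) :
      IK ext ((Formula.box (φ.imp ψ)).imp ((Formula.box φ).imp (Formula.box ψ)))
  | mp {φ ψ : Formula} : IK ext (φ.imp ψ) → IK ext φ → IK ext ψ
  | nec {φ : Formula} : IK ext φ → IK ext (Formula.box φ)

/-- Theorems of `iK`. -/
def IKDer : Formula → Prop := IK NoAxiom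

/-- Theorems of `iK + bem`. -/
def IKBem : Formula → Prop := IK BemAxiom

/-- Derivability from assumptions `Γ` over `iK+bem`: theorems of `iK+bem`,
members of `Γ`, closed under Modus Ponens. -/
inductive DerIKB (Γ : Set Formula) : Formula → Prop
  | thm {φ : Formula} : IKBem φ → DerIKB Γ φ
  | hyp {φ : Formula} : φ ∈ Γ → DerIKB Γ φ
  | mp {φ ψ : Formula} : DerIKB Γ (φ.imp ψ) → DerIKB Γ φ → DerIKB Γ ψ

/-- A set of modal formulas is *prime* if it is deductively closed over
`iK+bem`, consistent, and has the disjunction property. -/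
def PrimeSet (Γ : Set Formula) : Prop :=
  (∀ φ, DerIKB Γ φ → φ ∈ Γ) ∧ ¬ DerIKB Γ Formula.bot ∧
    (∀ φ ψ : Formula, φ.or ψ ∈ Γ → φ ∈ Γ ∨ ψ ∈ Γ)

/-- Forcing on birelational structures (data given unbundled):
intuitionistic clauses for the propositional connectives, and
`x ⊩ □φ` iff `y ⊩ φ` for all `y` with `x R y`. -/
def bforce {W : Type} (le R : W → W → Prop) (V : W → ℕ → Prop) :
    Formula → W → Prop
  | Formula.top, _ => True
  | Formula.bot, _ => False
  | Formula.var p, x => V x p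
  | Formula.and φ ψ, x => bforce le R V φ x ∧ bforce le R V ψ x
  | Formula.or φ ψ, x => bforce le R V φ x ∨ bforce le R V ψ x
  | Formula.imp φ ψ, x => ∀ y, le x y → bforce le R V φ y → bforce le R V ψ y
  | Formula.box φ, x => ∀ y, R x y → bforce le R V φ y

/-- Birelational models: a partial order `≤`, a modal relation `R`
satisfying the frame condition `x ≤ y ∧ y R z → x R z`, and a
`≤`-monotone valuation. -/
structure BirelModel where
  W : Type
  ne : Nonempty W
  le : W → W → Prop
  R : W → W → Prop
  le_refl : ∀ x, le x x
  le_trans : ∀ {x y z}, le x y → le y z → le x z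
  le_antisymm : ∀ {x y}, le x y → le y x → x = y
  frame : ∀ {x y z}, le x y → R y z → R x z
  V : W → ℕ → Prop
  mono : ∀ {x y p}, le x y → V x p → V y p

/-- Forcing in a birelational model. -/
def BirelModel.force (M : BirelModel) (φ : Formula) (x : M.W) : Prop :=
  bforce M.le M.R M.V φ x

/-- The `BEM` frame condition: `x ≤ y ∧ x R z → y R z`. -/
def BirelModel.BEM (M : BirelModel) : Prop :=
  ∀ x y z : M.W, M.le x y → M.R x z → M.R y z

/-- Forcing on concrete mixed structures (data given unbundled):
`P` is the (disjoint) union of the domains of the intuitionistic models,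
`world x` is the unique world `w` whose model contains `x`, `root w` is the
root `w̄`, `le` is the (disjoint) union of the intuitionistic orders, and
`R` is the modal accessibility between worlds.  The clauses are the
intuitionistic ones together with
`x ⊩ □φ` iff `v̄ ⊩ φ` for all `v` with `(world x) R v`. -/
def cforce {W P : Type} (world : P → W) (le : P → P → Prop)
    (R : W → W → Prop) (root : W → P) (V : P → ℕ → Prop) :
    Formula → P → Prop
  | Formula.top, _ => True
  | Formula.bot, _ => False
  | Formula.var p, x => V x p
  | Formula.and φ ψ, x =>
      cforce world le R root V φ x ∧ cforce world le R root V ψ x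
  | Formula.or φ ψ, x =>
      cforce world le R root V φ x ∨ cforce world le R root V ψ x
  | Formula.imp φ ψ, x =>
      ∀ y, le x y → cforce world le R root V φ y → cforce world le R root V ψ y
  | Formula.box φ, x => ∀ v, R (world x) v → cforce world le R root V φ (root v)

/-- Concrete mixed models: a Kripke frame `⟨W, R⟩` together with, for each
`w ∈ W`, a rooted intuitionistic Kripke model; the models have pairwise
disjoint domains, which is encoded by a type `P` of points together with the
map `world : P → W` sending each point to the world whose model contains it.
The order `le` only relates points of the same model, is a partial order,
each model has a least element (its root), and the valuation is monotone. -/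
structure CMM where
  W : Type
  P : Type
  ne : Nonempty W
  R : W → W → Prop
  world : P → W
  le : P → P → Prop
  le_world : ∀ {x y}, le x y → world x = world y
  le_refl : ∀ x, le x x
  le_trans : ∀ {x y z}, le x y → le y z → le x z
  le_antisymm : ∀ {x y}, le x y → le y x → x = y
  root : W → P
  root_world : ∀ w, world (root w) = w
  root_le : ∀ x, le (root (world x)) x
  V : P → ℕ → Prop
  mono : ∀ {x y p}, le x y → V x p → V y p

/-- Forcing in a concrete mixed model. -/
def CMM.force (M : CMM) (φ : Formula) (x : M.P) : Prop :=
  cforce M.world M.le M.R M.root M.V φ x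

/-- Mixed models in `MM(CPC, IPC)`: a Kripke frame `⟨W, R⟩` together with a
consistent theory `T w` for each world, closed under `⊢_{L_w}`-consequence for
some `L_w ∈ {CPC, IPC}`, where `□`- and `¬□`-formulas are evaluated by the
possible world semantics. -/
structure MixedModel where
  W : Type
  ne : Nonempty W
  R : W → W → Prop
  T : W → Set Formula
  consistent : ∀ w, Formula.bot ∉ T w
  closed : ∀ w, (∀ φ, DerCPC (T w) φ → φ ∈ T w) ∨ (∀ φ, DerIPC (T w) φ → φ ∈ T w)
  box_mem : ∀ w φ, Formula.box φ ∈ T w ↔ ∀ v, R w v → φ ∈ T v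
  negbox_mem : ∀ w φ, (Formula.box φ).neg ∈ T w ↔ ∃ v, R w v ∧ φ ∉ T v
lemma cforce_mono (M : CMM) :
    ∀ (φ : Formula) {x y : M.P}, M.le x y → M.force φ x → M.force φ y := by
  intro φ
  induction φ with
  | top => intro x y h hx; trivial
  | bot => intro x y h hx; exact hx
  | var p => intro x y h hx; exact M.mono h hx
  | and φ ψ ih1 ih2 => intro x y h hx; exact ⟨ih1 h hx.1, ih2 h hx.2⟩
  | or φ ψ ih1 ih2 =>
      intro x y h hx
      exact hx.elim (fun h1 => Or.inl (ih1 h h1)) (fun h2 => Or.inr (ih2 h h2))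
  | imp φ ψ ih1 ih2 => intro x y h hx z hz hφ; exact hx z (M.le_trans h hz) hφ
  | box φ ih =>
      intro x y h hx v hv
      exact hx v (by rwa [M.le_world h])

lemma ipc_ax_force (M : CMM) {φ : Formula} (h : IpcAxiom φ) :
    ∀ x : M.P, M.force φ x := by
  cases h with
  | a1 A B => exact fun x y hy hA z hz hB => cforce_mono M A hz hA
  | a2 A B C =>
      intro x y hy h1 z hz h2 u hu hA
      exact h2 u hu hA u (M.le_refl u) (h1 u (M.le_trans hz hu) hA)
  | a3 A B => exact fun x y hy hA => Or.inl hA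
  | a4 A B => exact fun x y hy hB => Or.inr hB
  | a5 A B C =>
      intro x y hy hAB z hz hAC u hu hBC
      cases hAB with
      | inl hA => exact hAC u hu (cforce_mono M A (M.le_trans hz hu) hA)
      | inr hB => exact hBC u (M.le_refl u) (cforce_mono M B (M.le_trans hz hu) hB)
  | a6 A B => exact fun x y hy hA z hz hB => ⟨cforce_mono M A hz hA, hB⟩
  | a7 A B => exact fun x y hy hAB => hAB.1
  | a8 A B => exact fun x y hy hAB => hAB.2
  | a9 A => exact fun x y hy hbot => hbot.elim

/-- If the root decides all propositional letters, forcing is constant on the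
whole intuitionistic model (box formulas are world-level anyway). -/
lemma cforce_const (M : CMM) (w : M.W)
    (hdec : ∀ p : ℕ, M.force ((Formula.var p).or (Formula.var p).neg) (M.root w)) :
    ∀ (φ : Formula) {y : M.P}, M.le (M.root w) y →
      (M.force φ y ↔ M.force φ (M.root w)) := by
  intro φ
  induction φ with
  | top => intro y hy; exact Iff.rfl
  | bot => intro y hy; exact Iff.rfl
  | var p =>
      intro y hy
      cases hdec p with
      | inl hp => exact ⟨fun _ => hp, fun _ => cforce_mono M _ hy hp⟩
      | inr hn =>
          exact ⟨fun h => (hn y hy h).elim,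
                 fun h => (hn (M.root w) (M.le_refl _) h).elim⟩
  | and φ ψ ih1 ih2 =>
      intro y hy
      exact and_congr (ih1 hy) (ih2 hy)
  | or φ ψ ih1 ih2 =>
      intro y hy
      exact or_congr (ih1 hy) (ih2 hy)
  | imp φ ψ ih1 ih2 =>
      intro y hy
      constructor
      · intro h z hz hφ
        exact (ih2 hz).mpr ((ih2 hy).mp
          (h y (M.le_refl y) ((ih1 hy).mpr ((ih1 hz).mp hφ))))
      · intro h z hz hφ
        exact h z (M.le_trans hy hz) hφ
  | box φ ih =>
      intro y hy
      have hw : M.world y = M.world (M.root w) := (M.le_world hy).symm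
      constructor
      · intro h v hv
        exact h v (by rwa [hw])
      · intro h v hv
        exact h v (by rwa [← hw])

lemma der_force (M : CMM) (w : M.W) (ext : Formula → Prop)
    (hext : ∀ φ, ext φ → M.force φ (M.root w))
    {Γ : Set Formula} (hΓ : ∀ ψ ∈ Γ, M.force ψ (M.root w)) :
    ∀ φ, Der ext Γ φ → M.force φ (M.root w) := by
  intro φ h
  induction h with
  | ax h => exact ipc_ax_force M h _
  | extra h => exact hext _ h
  | hyp h => exact hΓ _ h
  | mp h1 h2 ih1 ih2 => exact ih1 _ (M.le_refl _) ih2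

/-- For a concrete mixed model `M`, the theories
`T w := {φ | w̄ ⊩ φ}` form a mixed model in `MM(CPC, IPC)`:
(1) `⊥ ∉ T w`; (2) `T w` is closed under `⊢_{L_w}`-consequence, where
`L_w = CPC` if `p ∨ ¬p ∈ T w` for all propositional letters `p` and
`L_w = IPC` otherwise; (3) `□φ ∈ T w` iff `φ ∈ T v` for all `v` with `w R v`;
(4) `¬□φ ∈ T w` iff there is `v` with `w R v` and `φ ∉ T v`. -/
theorem cmm_induces_mixed_model (M : CMM) (T : M.W → Set Formula)
    (hT : ∀ w : M.W, T w = {φ : Formula | M.force φ (M.root w)}) :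
    (∀ w, Formula.bot ∉ T w) ∧
    (∀ w, (∀ p : ℕ, (Formula.var p).or (Formula.var p).neg ∈ T w) →
        ∀ φ, DerCPC (T w) φ → φ ∈ T w) ∧
    (∀ w, ¬ (∀ p : ℕ, (Formula.var p).or (Formula.var p).neg ∈ T w) →
        ∀ φ, DerIPC (T w) φ → φ ∈ T w) ∧
    (∀ w φ, Formula.box φ ∈ T w ↔ ∀ v, M.R w v → φ ∈ T v) ∧
    (∀ w φ, (Formula.box φ).neg ∈ T w ↔ ∃ v, M.R w v ∧ φ ∉ T v) := by
  have hmem : ∀ (w : M.W) (φ : Formula), φ ∈ T w ↔ M.force φ (M.root w) := by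
    intro w φ; rw [hT w]; exact Iff.rfl
  refine ⟨?_, ?_, ?_, ?_, ?_⟩
  · intro w h
    exact (hmem w Formula.bot).mp h
  · intro w hdec φ h
    have hdec' : ∀ p : ℕ,
        M.force ((Formula.var p).or (Formula.var p).neg) (M.root w) :=
      fun p => (hmem w _).mp (hdec p)
    refine (hmem w φ).mpr (der_force M w EmAxiom ?_ (fun ψ hψ => (hmem w ψ).mp hψ) φ h)
    intro ψ hψ
    cases hψ with
    | em A =>
        by_cases hA : M.force A (M.root w)
        · exact Or.inr hA
        · refine Or.inl ?_
          intro z hz hAz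
          exact hA ((cforce_const M w hdec' A hz).mp hAz)
  · intro w _ φ h
    exact (hmem w φ).mpr
      (der_force M w NoAxiom (fun ψ hψ => hψ.elim) (fun ψ hψ => (hmem w ψ).mp hψ) φ h)
  · intro w φ
    rw [hmem w (Formula.box φ)]
    constructor
    · intro h v hv
      refine (hmem v φ).mpr (h v ?_)
      rwa [M.root_world w]
    · intro h v hv
      rw [M.root_world w] at hv
      exact (hmem v φ).mp (h v hv)
  · intro w φ
    rw [hmem w (Formula.box φ).neg]
    constructor
    · intro h
      by_contra hc
      push_neg at hc
      refine h (M.root w) (M.le_refl _) ?_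
      intro v hv
      rw [M.root_world w] at hv
      exact (hmem v φ).mp (hc v hv)
    · rintro ⟨v, hv, hφ⟩ y hy hbox
      have hw : M.world y = w := by rw [← M.le_world hy, M.root_world w]
      exact hφ ((hmem v φ).mpr (hbox v (by rwa [hw])))
end

section
/- Let F = ⟨W, ≤, R⟩ be a birelational frame satisfying the BEM frame condition: for all x, y, z, if x ≤ y and xRz then yRz. Then for every valuation V monotone on F, every point x, and every modal formula φ, we have x ⊩ □φ ∨ ¬□φ. -/
/-- A birelational frame: a partial order `≤` and a relation `R` with the
frame condition `x ≤ y ∧ y R z → x R z`. -/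
structure BirelFrame where
  W : Type
  ne : Nonempty W
  le : W → W → Prop
  R : W → W → Prop
  le_refl : ∀ x, le x x
  le_trans : ∀ {x y z}, le x y → le y z → le x z
  le_antisymm : ∀ {x y}, le x y → le y x → x = y
  frame : ∀ {x y z}, le x y → R y z → R x z

/-- If a birelational frame satisfies the `BEM` frame condition
(`x ≤ y ∧ x R z → y R z`), then for every monotone valuation, every point
`x`, and every modal formula `φ`, we have `x ⊩ □φ ∨ ¬□φ`. -/
theorem bem_frame_condition_implies_bem (F : BirelFrame)
    (hBEM : ∀ x y z : F.W, F.le x y → F.R x z → F.R y z)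
    (V : F.W → ℕ → Prop) (hV : ∀ (x y : F.W) (p : ℕ), F.le x y → V x p → V y p)
    (x : F.W) (φ : Formula) :
    bforce F.le F.R V ((Formula.box φ).or (Formula.box φ).neg) x := by
  by_cases h : ∀ z, F.R x z → bforce F.le F.R V φ z
  · exact Or.inl h
  · right
    push_neg at h
    obtain ⟨z, hxz, hz⟩ := h
    intro y hxy hy
    exact hz (hy z (hBEM x y z hxy hxz))
end

section
/- There exists a birelational frame that does not satisfy the BEM frame condition but on which every instance of Box Excluded Middle is valid. Concretely: let W = {a, b, c, d} with ≤ the reflexive closure of {a ≤ b, d ≤ c} and R = {(a,c), (b,d), (a,d)}. This is a birelational frame, it fails BEM (since a ≤ b and aRc but not bRc), and for every monotone valuation V on this frame, every world x ∈ W, and every modal formula φ, we have x ⊩ □φ ∨ ¬□φ. -/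
lemma bforce_mono {W : Type} (le R : W → W → Prop) (V : W → ℕ → Prop)
    (htrans : ∀ x y z, le x y → le y z → le x z)
    (hframe : ∀ x y z, le x y → R y z → R x z)
    (hmono : ∀ x y p, le x y → V x p → V y p) :
    ∀ (φ : Formula) (x y : W), le x y → bforce le R V φ x → bforce le R V φ y := by
  intro φ
  induction φ with
  | top => intro x y _ _; trivial
  | bot => intro x y _ h; exact h
  | var p => intro x y hle h; exact hmono x y p hle h
  | and a b iha ihb =>
      intro x y hle h
      exact ⟨iha x y hle h.1, ihb x y hle h.2⟩
  | or a b iha ihb =>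
      intro x y hle h
      exact h.elim (fun h => Or.inl (iha x y hle h)) (fun h => Or.inr (ihb x y hle h))
  | imp a b iha ihb =>
      intro x y hle h z hz ha
      exact h z (htrans x y z hle hz) ha
  | box a iha =>
      intro x y hle h z hz
      exact h z (hframe x y z hle hz)

/-- A birelational frame that fails the `BEM` frame condition
but validates every instance of Box Excluded Middle.  Worlds `a,b,c,d` are
`0,1,2,3 : Fin 4`; `≤` is the reflexive closure of `{a ≤ b, d ≤ c}` and
`R = {(a,c),(b,d),(a,d)}`. -/
theorem bem_not_necessary :
    ∃ le R : Fin 4 → Fin 4 → Prop,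
      le = (fun x y => x = y ∨ (x = 0 ∧ y = 1) ∨ (x = 3 ∧ y = 2)) ∧
      R = (fun x y => (x = 0 ∧ y = 2) ∨ (x = 1 ∧ y = 3) ∨ (x = 0 ∧ y = 3)) ∧
      (∀ x, le x x) ∧
      (∀ x y z, le x y → le y z → le x z) ∧
      (∀ x y, le x y → le y x → x = y) ∧
      (∀ x y z, le x y → R y z → R x z) ∧
      ¬ (∀ x y z, le x y → R x z → R y z) ∧
      (le 0 1 ∧ R 0 2 ∧ ¬ R 1 2) ∧
      (∀ V : Fin 4 → ℕ → Prop, (∀ x y p, le x y → V x p → V y p) →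
        ∀ (x : Fin 4) (φ : Formula),
          bforce le R V ((Formula.box φ).or (Formula.box φ).neg) x) := by
  refine ⟨_, _, rfl, rfl, by decide, by decide, by decide, by decide, by decide, by decide, ?_⟩
  set le : Fin 4 → Fin 4 → Prop :=
    (fun x y => x = y ∨ (x = 0 ∧ y = 1) ∨ (x = 3 ∧ y = 2)) with hle
  set R : Fin 4 → Fin 4 → Prop :=
    (fun x y => (x = 0 ∧ y = 2) ∨ (x = 1 ∧ y = 3) ∨ (x = 0 ∧ y = 3)) with hR
  intro V hV x φ
  have htrans : ∀ x y z : Fin 4, le x y → le y z → le x z := by decide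
  have hframe : ∀ x y z : Fin 4, le x y → R y z → R x z := by decide
  have hmono := bforce_mono le R V htrans hframe hV
  show bforce le R V (Formula.box φ) x ∨ bforce le R V ((Formula.box φ).neg) x
  -- boxes are vacuous at 2 and 3
  have hvac : ∀ x : Fin 4, x = 2 ∨ x = 3 → bforce le R V (Formula.box φ) x := by
    intro x hx y hy
    rcases hx with h | h <;> subst h <;>
      rcases hy with ⟨h1, _⟩ | ⟨h1, _⟩ | ⟨h1, _⟩ <;> exact absurd h1 (by decide)
  fin_cases x
  · -- x = 0
    by_cases h2 : bforce le R V φ 2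
    · by_cases h3 : bforce le R V φ 3
      · left
        intro y hy
        rcases hy with ⟨_, h⟩ | ⟨_, h⟩ | ⟨_, h⟩ <;> subst h <;> assumption
      · right
        intro y hy hbox
        have hy01 : y = 0 ∨ y = 1 := by
          rcases hy with h | ⟨_, h⟩ | ⟨h, _⟩
          · left; exact h.symm
          · right; exact h
          · exact absurd h (by decide)
        rcases hy01 with h | h <;> subst h
        · exact h3 (hbox 3 (Or.inr (Or.inr ⟨rfl, rfl⟩)))
        · exact h3 (hbox 3 (Or.inr (Or.inl ⟨rfl, rfl⟩)))
    · right
      intro y hy hbox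
      have hy01 : y = 0 ∨ y = 1 := by
        rcases hy with h | ⟨_, h⟩ | ⟨h, _⟩
        · left; exact h.symm
        · right; exact h
        · exact absurd h (by decide)
      rcases hy01 with h | h <;> subst h
      · exact h2 (hbox 2 (Or.inl ⟨rfl, rfl⟩))
      · -- □φ at 1 gives φ at 3, and 3 ≤ 2 gives φ at 2
        have h3 : bforce le R V φ 3 := hbox 3 (Or.inr (Or.inl ⟨rfl, rfl⟩))
        exact h2 (hmono φ 3 2 (Or.inr (Or.inr ⟨rfl, rfl⟩)) h3)
  · -- x = 1
    by_cases h3 : bforce le R V φ 3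
    · left
      intro y hy
      rcases hy with ⟨h, _⟩ | ⟨_, h⟩ | ⟨h, _⟩
      · exact absurd h (by decide)
      · subst h; exact h3
      · exact absurd h (by decide)
    · right
      intro y hy hbox
      have hy1 : y = 1 := by
        rcases hy with h | ⟨h, _⟩ | ⟨h, _⟩
        · exact h.symm
        · exact absurd h (by decide)
        · exact absurd h (by decide)
      subst hy1
      exact h3 (hbox 3 (Or.inr (Or.inl ⟨rfl, rfl⟩)))
  · -- x = 2
    exact Or.inl (hvac 2 (Or.inl rfl))
  · -- x = 3
    exact Or.inl (hvac 3 (Or.inr rfl))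
end

section
/- The canonical model of iK+bem, whose worlds are the prime sets of modal formulas, with Γ ≤ Γ' iff Γ ⊆ Γ', Γ R Δ iff (□φ ∈ Γ implies φ ∈ Δ for all φ), and V(Γ) = {p | p ∈ Γ}, is a birelational model satisfying the BEM frame condition: if Γ ⊆ Γ' and Γ R Δ, then Γ' R Δ. -/
/-- Worlds of the canonical model of `iK+bem`: prime sets of formulas. -/
def CanW : Type := {Γ : Set Formula // PrimeSet Γ}

/-- Canonical intuitionistic order: inclusion. -/
def canLe (Γ Γ' : CanW) : Prop := Γ.val ⊆ Γ'.val

/-- Canonical modal relation: `Γ R Δ` iff `□φ ∈ Γ` implies `φ ∈ Δ`. -/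
def canR (Γ Δ : CanW) : Prop := ∀ φ : Formula, Formula.box φ ∈ Γ.val → φ ∈ Δ.val

/-- Canonical valuation: `p ∈ V(Γ)` iff `p ∈ Γ`. -/
def canV (Γ : CanW) (p : ℕ) : Prop := Formula.var p ∈ Γ.val
/-- The canonical model of `iK+bem` is a birelational model
satisfying the `BEM` frame condition: in particular, if `Γ ⊆ Γ'` and `Γ R Δ`,
then `Γ' R Δ`. -/
theorem canonical_model_birelational_BEM :
    (∀ Γ : CanW, canLe Γ Γ) ∧
    (∀ Γ Γ' Γ'' : CanW, canLe Γ Γ' → canLe Γ' Γ'' → canLe Γ Γ'') ∧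
    (∀ Γ Γ' : CanW, canLe Γ Γ' → canLe Γ' Γ → Γ = Γ') ∧
    (∀ Γ Γ' Δ : CanW, canLe Γ Γ' → canR Γ' Δ → canR Γ Δ) ∧
    (∀ (Γ Γ' : CanW) (p : ℕ), canLe Γ Γ' → canV Γ p → canV Γ' p) ∧
    (∀ Γ Γ' Δ : CanW, canLe Γ Γ' → canR Γ Δ → canR Γ' Δ) := by
  refine ⟨fun Γ => subset_rfl, fun _ _ _ h h' => h.trans h',
    fun Γ Γ' h h' => Subtype.ext (subset_antisymm h h'),
    fun Γ Γ' Δ hle hR φ hbox => hR φ (hle hbox),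
    fun Γ Γ' p hle hv => hle hv, ?_⟩
  intro Γ Γ' Δ hle hR φ hbox
  obtain ⟨hcl, hcons, hdisj⟩ := Γ.2
  have hmem : (Formula.box φ).or (Formula.neg (Formula.box φ)) ∈ Γ.val :=
    hcl _ (DerIKB.thm (IK.extra (BemAxiom.bem φ)))
  rcases hdisj _ _ hmem with h | h
  · exact hR φ h
  · exact absurd (DerIKB.mp (DerIKB.hyp (hle h)) (DerIKB.hyp hbox)) Γ'.2.2.1
end

section
/- Soundness of iK+bem with respect to mixed models: if the modal formula φ is derivable in iK+bem, then φ ∈ T_w for every world w of every mixed model ⟨W, R, {T_w}⟩ in MM(CPC,IPC). -/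
lemma der_id (ext : Formula → Prop) (Γ : Set Formula) (A : Formula) :
    Der ext Γ (A.imp A) :=
  Der.mp (Der.mp (Der.ax (IpcAxiom.a2 A (A.imp A) A))
      (Der.ax (IpcAxiom.a1 A A)))
    (Der.ax (IpcAxiom.a1 A (A.imp A)))

lemma der_deduction {ext : Formula → Prop} {Γ : Set Formula} {A B : Formula}
    (h : Der ext (insert A Γ) B) : Der ext Γ (A.imp B) := by
  induction h with
  | ax h => exact Der.mp (Der.ax (IpcAxiom.a1 _ A)) (Der.ax h)
  | extra h => exact Der.mp (Der.ax (IpcAxiom.a1 _ A)) (Der.extra h)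
  | hyp h =>
      rcases h with h | h
      · subst h; exact der_id _ _ _
      · exact Der.mp (Der.ax (IpcAxiom.a1 _ A)) (Der.hyp h)
  | mp _ _ ih1 ih2 =>
      exact Der.mp (Der.mp (Der.ax (IpcAxiom.a2 A _ _)) ih2) ih1

lemma der_ipc_cpc {Γ : Set Formula} {φ : Formula}
    (h : Der NoAxiom Γ φ) : Der EmAxiom Γ φ := by
  induction h with
  | ax h => exact Der.ax h
  | extra h => exact h.elim
  | hyp h => exact Der.hyp h
  | mp _ _ ih1 ih2 => exact Der.mp ih1 ih2

lemma closed_ipc (M : MixedModel) (w : M.W) :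
    ∀ φ, DerIPC (M.T w) φ → φ ∈ M.T w := by
  intro φ h
  rcases M.closed w with hc | hc
  · exact hc φ (der_ipc_cpc h)
  · exact hc φ h

/-- From `¬A ∈ Γ`, derive `A.imp B` in IPC. -/
lemma der_neg_imp {Γ : Set Formula} {A B : Formula}
    (h : A.neg ∈ Γ) : DerIPC Γ (A.imp B) := by
  apply der_deduction
  have hA : Der NoAxiom (insert A Γ) A := Der.hyp (Set.mem_insert _ _)
  have hn : Der NoAxiom (insert A Γ) A.neg :=
    Der.hyp (Set.mem_insert_of_mem _ h)
  exact Der.mp (Der.ax (IpcAxiom.a9 B)) (Der.mp hn hA)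

/-- Soundness of `iK+bem` with respect to mixed models: if `φ`
is derivable in `iK+bem`, then `φ ∈ T w` for every world `w` of every mixed
model in `MM(CPC, IPC)`. -/
theorem ikbem_sound_for_mixed_models (φ : Formula) (h : IKBem φ) :
    ∀ (M : MixedModel) (w : M.W), φ ∈ M.T w := by
  induction h with
  | ax h => intro M w; exact closed_ipc M w _ (Der.ax h)
  | extra h =>
      intro M w
      rcases h with ⟨A⟩
      apply closed_ipc M w
      by_cases hb : ∀ v, M.R w v → A ∈ M.T v
      · have : Formula.box A ∈ M.T w := (M.box_mem w A).mpr hb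
        exact Der.mp (Der.ax (IpcAxiom.a3 _ _)) (Der.hyp this)
      · push_neg at hb
        rcases hb with ⟨v, hv, hA⟩
        have : (Formula.box A).neg ∈ M.T w :=
          (M.negbox_mem w A).mpr ⟨v, hv, hA⟩
        exact Der.mp (Der.ax (IpcAxiom.a4 _ _)) (Der.hyp this)
  | dist ψ χ =>
      intro M w
      apply closed_ipc M w
      by_cases hbox : Formula.box χ ∈ M.T w
      · -- □χ ∈ T w, so the implication follows trivially
        exact Der.mp (Der.ax (IpcAxiom.a1 _ _))
          (Der.mp (Der.ax (IpcAxiom.a1 _ _)) (Der.hyp hbox))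
      · have : ∃ v, M.R w v ∧ χ ∉ M.T v := by
          by_contra hcon
          push_neg at hcon
          exact hbox ((M.box_mem w χ).mpr hcon)
        rcases this with ⟨v, hv, hχ⟩
        by_cases himp : (ψ.imp χ) ∈ M.T v
        · -- then ψ ∉ T v, so ¬□ψ ∈ T w
          have hψ : ψ ∉ M.T v := by
            intro hψ
            exact hχ (closed_ipc M v _ (Der.mp (Der.hyp himp) (Der.hyp hψ)))
          have hn : (Formula.box ψ).neg ∈ M.T w :=
            (M.negbox_mem w ψ).mpr ⟨v, hv, hψ⟩
          exact Der.mp (Der.ax (IpcAxiom.a1 _ _)) (der_neg_imp hn)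
        · have hn : (Formula.box (ψ.imp χ)).neg ∈ M.T w :=
            (M.negbox_mem w (ψ.imp χ)).mpr ⟨v, hv, himp⟩
          exact der_neg_imp hn
  | mp _ _ ih1 ih2 =>
      intro M w
      exact closed_ipc M w _ (Der.mp (Der.hyp (ih1 M w)) (Der.hyp (ih2 M w)))
  | nec _ ih =>
      intro M w
      exact (M.box_mem w _).mpr fun v _ => ih M v
end

section
/- Let M = ⟨W, R, {M_w}⟩ be a concrete mixed model with each M_w = ⟨W_w, ≤_w, V_w⟩. Define M' = ⟨W', ≤', R', V'⟩ by W' = ⋃_{w∈W} W_w; xR'y iff there are w, v ∈ W with wRv, w̄ ≤_w x, and y = v̄; x ≤' y iff x ≤_w y for some w ∈ W; and V'(v) = V_w(v) for the unique w with w̄ ≤_w v. Then M' is a birelational model whose frame satisfies the BEM condition, and for every point x and modal formula φ, M, x ⊩ φ (concrete-mixed-model forcing) if and only if M', x ⊩ φ (birelational forcing). -/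
/-- Every concrete mixed model induces a birelational model
(on the union of the domains, with `x R' y` iff there are `w, v` with
`w R v`, `w̄ ≤ x` and `y = v̄`, with `≤' = ≤` and the same valuation) whose
frame satisfies the `BEM` condition and which forces exactly the same
formulas at every point. -/
theorem cmm_to_birelational (M : CMM) (R' : M.P → M.P → Prop)
    (hR' : R' = fun x y => ∃ v : M.W, M.R (M.world x) v ∧ y = M.root v) :
    -- `⟨M.P, M.le, R', M.V⟩` is a birelational model: `M.le` is a partial
    -- order and `M.V` is `≤`-monotone by assumption; the frame condition:
    (∀ x y z : M.P, M.le x y → R' y z → R' x z) ∧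
    -- it satisfies the BEM frame condition:
    (∀ x y z : M.P, M.le x y → R' x z → R' y z) ∧
    -- and it forces the same formulas as the concrete mixed model:
    (∀ (φ : Formula) (x : M.P), M.force φ x ↔ bforce M.le R' M.V φ x) := by
  subst hR'
  refine ⟨?_, ?_, ?_⟩
  · rintro x y z hxy ⟨v, hv, rfl⟩
    exact ⟨v, by rwa [M.le_world hxy], rfl⟩
  · rintro x y z hxy ⟨v, hv, rfl⟩
    exact ⟨v, by rwa [← M.le_world hxy], rfl⟩
  · intro φ
    induction φ with
    | top => intro x; simp [CMM.force, cforce, bforce]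
    | bot => intro x; simp [CMM.force, cforce, bforce]
    | var p => intro x; simp [CMM.force, cforce, bforce]
    | and φ ψ ihφ ihψ =>
      intro x
      simp only [CMM.force, cforce, bforce] at *
      exact and_congr (ihφ x) (ihψ x)
    | or φ ψ ihφ ihψ =>
      intro x
      simp only [CMM.force, cforce, bforce] at *
      exact or_congr (ihφ x) (ihψ x)
    | imp φ ψ ihφ ihψ =>
      intro x
      simp only [CMM.force, cforce, bforce] at *
      constructor
      · intro h y hxy hy
        exact (ihψ y).mp (h y hxy ((ihφ y).mpr hy))
      · intro h y hxy hy
        exact (ihψ y).mpr (h y hxy ((ihφ y).mp hy))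
    | box φ ih =>
      intro x
      simp only [CMM.force, cforce, bforce] at *
      constructor
      · rintro h y ⟨v, hv, rfl⟩
        exact (ih (M.root v)).mp (h v hv)
      · intro h v hv
        exact (ih (M.root v)).mpr (h (M.root v) ⟨v, hv, rfl⟩)
end

section
/- Let M = ⟨W, ≤, R, V⟩ be a birelational model whose frame satisfies the BEM condition. Define a concrete mixed model M' as follows: its Kripke frame has worlds the pairs (x,x) for x ∈ W, with (x,x) R' (y,y) iff xRy; to each world (x,x) attach the rooted intuitionistic Kripke model with domain {(x,y) | x ≤ y}, root (x,x), order (x,y) ≤' (x,y') iff y ≤ y', and valuation p ∈ V'((x,y)) iff p ∈ V(y). Then M' is a concrete mixed model, and for all x, a ∈ W with a ≤ x and every modal formula ψ: M, x ⊩ ψ (birelational forcing) if and only if M', (a,x) ⊩ ψ (concrete-mixed-model forcing). In particular, M, x ⊩ ψ iff M', (x,x) ⊩ ψ. -/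
/-- Points of the concrete mixed model built from a birelational model `M`:
pairs `(x, y)` with `x ≤ y`; the pair `(x, y)` is the copy of `y` living in
the intuitionistic model attached to the world `(x, x)`. -/
def Pt (M : BirelModel) : Type := {p : M.W × M.W // M.le p.1 p.2}

/-- The world containing the point `(x, y)` is `x` (representing `(x,x)`). -/
def ptWorld (M : BirelModel) (p : Pt M) : M.W := p.val.1

/-- `(x, y) ≤' (x', y')` iff `x = x'` and `y ≤ y'`. -/
def ptLe (M : BirelModel) (p q : Pt M) : Prop :=
  p.val.1 = q.val.1 ∧ M.le p.val.2 q.val.2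

/-- The root of the model attached to `x` is `(x, x)`. -/
def ptRoot (M : BirelModel) (x : M.W) : Pt M := ⟨(x, x), M.le_refl x⟩

/-- `p ∈ V'((x, y))` iff `p ∈ V(y)`. -/
def ptV (M : BirelModel) (p : Pt M) (n : ℕ) : Prop := M.V p.val.2 n

lemma birel_key (M : BirelModel)
    (hBEM : ∀ x y z : M.W, M.le x y → M.R x z → M.R y z) (ψ : Formula) :
    ∀ (a x : M.W) (h : M.le a x),
      bforce M.le M.R M.V ψ x ↔
        cforce (ptWorld M) (ptLe M) M.R (ptRoot M) (ptV M) ψ ⟨(a, x), h⟩ := by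
  induction ψ with
  | top => intro a x h; simp [bforce, cforce]
  | bot => intro a x h; simp [bforce, cforce]
  | var n => intro a x h; simp [bforce, cforce, ptV]
  | and φ χ ih1 ih2 =>
      intro a x h
      exact Iff.and (ih1 a x h) (ih2 a x h)
  | or φ χ ih1 ih2 =>
      intro a x h
      exact Iff.or (ih1 a x h) (ih2 a x h)
  | imp φ χ ih1 ih2 =>
      intro a x h
      constructor
      · intro H q hq hφ
        obtain ⟨⟨b, y⟩, hby⟩ := q
        obtain ⟨hb, hxy⟩ := hq
        cases hb
        exact (ih2 a y hby).mp (H y hxy ((ih1 a y hby).mpr hφ))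
      · intro H y hxy hφ
        have hay : M.le a y := M.le_trans h hxy
        exact (ih2 a y hay).mpr
          (H ⟨(a, y), hay⟩ ⟨rfl, hxy⟩ ((ih1 a y hay).mp hφ))
  | box φ ih =>
      intro a x h
      constructor
      · intro H v hv
        exact (ih v v (M.le_refl v)).mp (H v (hBEM a x v h hv))
      · intro H v hv
        exact (ih v v (M.le_refl v)).mpr (H v (M.frame h hv))

/-- Every birelational model `M` whose frame satisfies the
`BEM` condition induces a concrete mixed model (worlds are the pairs
`(x, x)` for `x ∈ W` with `(x,x) R' (y,y)` iff `x R y`; the model attached to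
`(x, x)` has domain `{(x, y) | x ≤ y}`, root `(x, x)`, order
`(x,y) ≤' (x,y')` iff `y ≤ y'`, and valuation `V'((x,y)) = V(y)`) such that
for all `a ≤ x` and every formula `ψ`, `M, x ⊩ ψ` iff `M', (a, x) ⊩ ψ`;
in particular, `M, x ⊩ ψ` iff `M', (x, x) ⊩ ψ`. -/
theorem birelational_to_cmm (M : BirelModel)
    (hBEM : ∀ x y z : M.W, M.le x y → M.R x z → M.R y z) :
    -- the data defines a concrete mixed model:
    (∀ p q : Pt M, ptLe M p q → ptWorld M p = ptWorld M q) ∧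
    (∀ p : Pt M, ptLe M p p) ∧
    (∀ p q r : Pt M, ptLe M p q → ptLe M q r → ptLe M p r) ∧
    (∀ p q : Pt M, ptLe M p q → ptLe M q p → p = q) ∧
    (∀ x : M.W, ptWorld M (ptRoot M x) = x) ∧
    (∀ p : Pt M, ptLe M (ptRoot M (ptWorld M p)) p) ∧
    (∀ (p q : Pt M) (n : ℕ), ptLe M p q → ptV M p n → ptV M q n) ∧
    -- forcing equivalence for all `a ≤ x`:
    (∀ (a x : M.W) (h : M.le a x) (ψ : Formula),
        bforce M.le M.R M.V ψ x ↔
          cforce (ptWorld M) (ptLe M) M.R (ptRoot M) (ptV M) ψ ⟨(a, x), h⟩) ∧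
    -- in particular, at the roots:
    (∀ (x : M.W) (ψ : Formula),
        bforce M.le M.R M.V ψ x ↔
          cforce (ptWorld M) (ptLe M) M.R (ptRoot M) (ptV M) ψ
            (ptRoot M x)) := by
  refine ⟨fun p q hpq => hpq.1, fun p => ⟨rfl, M.le_refl _⟩,
    fun p q r h1 h2 => ⟨h1.1.trans h2.1, M.le_trans h1.2 h2.2⟩,
    fun p q h1 h2 => Subtype.ext (Prod.ext h1.1 (M.le_antisymm h1.2 h2.2)),
    fun x => rfl, fun p => ⟨rfl, p.property⟩,
    fun p q n hpq => M.mono hpq.2,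
    fun a x h ψ => birel_key M hBEM ψ a x h,
    fun x ψ => birel_key M hBEM ψ x x (M.le_refl x)⟩
end

section
/- If the modal formula φ is forced at every point of every concrete mixed model, then φ is forced at every point of every birelational model whose frame satisfies the BEM condition. -/
/-- The concrete mixed model built from a birelational model: worlds are the
points, and the intuitionistic model at `w` is the upset of `w`. -/
def mkCMM (M : BirelModel) : CMM where
  W := M.W
  P := {p : M.W × M.W // M.le p.1 p.2}
  ne := M.ne
  R := M.R
  world := fun p => p.val.1
  le := fun p q => p.val.1 = q.val.1 ∧ M.le p.val.2 q.val.2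
  le_world := fun h => h.1
  le_refl := fun p => ⟨rfl, M.le_refl _⟩
  le_trans := fun h1 h2 => ⟨h1.1.trans h2.1, M.le_trans h1.2 h2.2⟩
  le_antisymm := fun h1 h2 => Subtype.ext (Prod.ext h1.1 (M.le_antisymm h1.2 h2.2))
  root := fun w => ⟨(w, w), M.le_refl w⟩
  root_world := fun _ => rfl
  root_le := fun p => ⟨rfl, p.property⟩
  V := fun p => M.V p.val.2
  mono := fun h => M.mono h.2

lemma mkCMM_force (M : BirelModel) (hbem : M.BEM) (ψ : Formula) :
    ∀ p : (mkCMM M).P, (mkCMM M).force ψ p ↔ M.force ψ p.val.2 := by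
  induction ψ with
  | top => intro p; exact Iff.rfl
  | bot => intro p; exact Iff.rfl
  | var n => intro p; exact Iff.rfl
  | and a b iha ihb => intro p; exact and_congr (iha p) (ihb p)
  | or a b iha ihb => intro p; exact or_congr (iha p) (ihb p)
  | imp a b iha ihb =>
    intro p
    constructor
    · intro hf y hy ha
      have hy' : M.le p.val.1 y := M.le_trans p.property hy
      exact (ihb ⟨(p.val.1, y), hy'⟩).mp
        (hf ⟨(p.val.1, y), hy'⟩ ⟨rfl, hy⟩ ((iha _).mpr ha))
    · intro hf q hq ha
      exact (ihb q).mpr (hf q.val.2 hq.2 ((iha q).mp ha))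
  | box a iha =>
    intro p
    constructor
    · intro hf y hy
      have hy' : M.R p.val.1 y := M.frame p.property hy
      exact (iha _).mp (hf y hy')
    · intro hf v hv
      have hv' : M.R p.val.2 v := hbem _ _ _ p.property hv
      exact (iha _).mpr (hf v hv')

/-- If `φ` is forced at every point of every concrete mixed
model, then `φ` is forced at every point of every birelational model whose
frame satisfies the `BEM` condition. -/
theorem cmm_valid_implies_bem_valid (φ : Formula)
    (h : ∀ (M : CMM) (x : M.P), M.force φ x) :
    ∀ M : BirelModel, M.BEM → ∀ x : M.W, M.force φ x := by
  intro M hbem x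
  exact (mkCMM_force M hbem φ ⟨(x, x), M.le_refl x⟩).mp (h (mkCMM M) _)
end
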